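/- arXiv:1001.1654 — 3 statements merged into one kernel-verified Lean document; each statement's English description precedes it below -/
import Mathlib

section
/- Suppose A = QR with Q ∈ ℝ^{N×N} orthogonal (QᵀQ = I) and R ∈ ℝ^{N×N} upper triangular invertible. Let dA, dQ, dR satisfy dA = dQ·R + Q·dR, (dQ)ᵀQ + Qᵀ dQ = 0, and dR upper triangular (P_L ∘ dR = 0). Then with X := Qᵀ dQ one has P_L ∘ X = P_L ∘ (Qᵀ · dA · R⁻¹), dR = Qᵀ dA − X R, and dQ = (dA − Q dR) R⁻¹. -/
/-!
Multiplying `dA = dQ R + Q dR` on the left by `Qᵀ` gives `Qᵀ dA = X R + dR`, which is the formula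
for `dR`, and on the right by `R⁻¹` gives `Qᵀ dA R⁻¹ = X + dR R⁻¹`. The correction `dR R⁻¹` is a
product of upper triangular matrices, hence upper triangular and invisible to `P_L ∘ ·`.
-/

open Matrix
open scoped Matrix

/-- `P_L`: strictly lower triangular all-ones pattern. -/
def PL (N : ℕ) : Matrix (Fin N) (Fin N) ℝ := Matrix.of fun i j => if j < i then 1 else 0

theorem Matrix.BlockTriangular.nonsing_inv {m α R : Type*} [Fintype m] [DecidableEq m]
    [LinearOrder α] [CommRing R] {M : Matrix m m R} {b : m → α} (hM : M.BlockTriangular b) :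
    M⁻¹.BlockTriangular b := by
  by_cases h : IsUnit M.det
  · have := M.invertibleOfIsUnitDet h
    exact blockTriangular_inv_of_blockTriangular hM
  · rw [nonsing_inv_apply_not_isUnit M h]
    exact blockTriangular_zero

theorem PL_hadamard_eq_zero_iff_blockTriangular {N : ℕ} (M : Matrix (Fin N) (Fin N) ℝ) :
    PL N ⊙ M = 0 ↔ M.BlockTriangular id := by
  simp only [BlockTriangular, id, ← Matrix.ext_iff, hadamard_apply, PL, of_apply, Matrix.zero_apply,
    ite_mul, one_mul, zero_mul]
  refine forall_congr' fun i => forall_congr' fun j => ?_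
  by_cases hji : j < i <;> simp [hji]

theorem PL_hadamard_mul_inv_eq_zero {N : ℕ} {U R : Matrix (Fin N) (Fin N) ℝ}
    (hU : PL N ⊙ U = 0) (hR : PL N ⊙ R = 0) : PL N ⊙ (U * R⁻¹) = 0 := by
  rw [PL_hadamard_eq_zero_iff_blockTriangular] at *
  exact hU.mul hR.nonsing_inv

theorem qr_differential_formulas_general (N : ℕ)
    (Q R dA dQ dR : Matrix (Fin N) (Fin N) ℝ)
    (hQ : Qᵀ * Q = 1)
    (hR : (PL N) ⊙ R = 0) (hRinv : IsUnit R.det)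
    (hdA : dA = dQ * R + Q * dR)
    (hdR : (PL N) ⊙ dR = 0) :
    (PL N) ⊙ (Qᵀ * dQ) = (PL N) ⊙ (Qᵀ * dA * R⁻¹) ∧
    dR = Qᵀ * dA - (Qᵀ * dQ) * R ∧
    dQ = (dA - Q * dR) * R⁻¹ := by
  have hQdA : Qᵀ * dA = Qᵀ * dQ * R + dR := by
    rw [hdA, mul_add, ← mul_assoc, ← mul_assoc, hQ, one_mul]
  have hRR : R * R⁻¹ = 1 := mul_nonsing_inv R hRinv
  refine ⟨?_, by rw [hQdA, add_sub_cancel_left], ?_⟩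
  · rw [hQdA, add_mul, mul_assoc, hRR, mul_one, hadamard_add, PL_hadamard_mul_inv_eq_zero hdR hR,
      add_zero]
  · rw [hdA, add_sub_cancel_right, mul_assoc, hRR, mul_one]

theorem qr_differential_formulas (N : ℕ)
    (A Q R dA dQ dR : Matrix (Fin N) (Fin N) ℝ)
    (hA : A = Q * R) (hQ : Qᵀ * Q = 1)
    (hR : (PL N) ⊙ R = 0) (hRinv : IsUnit R.det)
    (hdA : dA = dQ * R + Q * dR)
    (hdQ : dQᵀ * Q + Qᵀ * dQ = 0)
    (hdR : (PL N) ⊙ dR = 0) :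
    (PL N) ⊙ (Qᵀ * dQ) = (PL N) ⊙ (Qᵀ * dA * R⁻¹) ∧
    dR = Qᵀ * dA - (Qᵀ * dQ) * R ∧
    dQ = (dA - Q * dR) * R⁻¹ :=
  qr_differential_formulas_general N Q R dA dQ dR hQ hR hRinv hdA hdR
end

section
/- Let A = QR with Q orthogonal and R upper triangular invertible, and let dA, dQ, dR be as in the differentiated QR system (dA = dQ R + Q dR, dQᵀQ + QᵀdQ = 0, P_L ∘ dR = 0). Then for arbitrary matrices Q̄, R̄ ∈ ℝ^{N×N}, defining Ā := Q( R̄ + P_L ∘ (R R̄ᵀ − R̄ Rᵀ + Qᵀ Q̄ − Q̄ᵀ Q) · R⁻ᵀ ) + (Q̄ − Q Qᵀ Q̄) R⁻ᵀ, one has tr(Āᵀ dA) = tr(Q̄ᵀ dQ) + tr(R̄ᵀ dR). -/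
open Matrix
open scoped Matrix

/-! Put `S = Qᵀ dQ`: it is antisymmetric, `dQ = Q S` and `Qᵀ dA = S R + dR`. Pairing with
`Ā = Q (R̄ + Y R⁻ᵀ)`, `Y = P_L ∘ X`, gives
`tr(R̄ᵀ S R) + tr(R̄ᵀ dR) + tr(Yᵀ S) + tr(Yᵀ dR R⁻¹)`. The last term vanishes because
`dR R⁻¹` is upper triangular while `Y` is strictly lower triangular. Since `X = M - Mᵀ` with
`M = R R̄ᵀ + Qᵀ Q̄` and `S = L - Lᵀ` with `L = P_L ∘ S`, one gets `tr(Yᵀ S) = tr(Mᵀ S)`, whose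
`R R̄ᵀ` part cancels `tr(R̄ᵀ S R)` by antisymmetry of `S`, leaving `tr(Q̄ᵀ Q S) = tr(Q̄ᵀ dQ)`. -/

namespace Matrix

variable {m n α : Type*} [Fintype m] [Fintype n]

theorem trace_transpose_hadamard_mul [CommSemiring α] (A B C : Matrix m n α) :
    ((A ⊙ B)ᵀ * C).trace = (Bᵀ * (A ⊙ C)).trace := by
  simp only [trace, diag, mul_apply, transpose_apply, hadamard_apply]
  exact Finset.sum_congr rfl fun _ _ => Finset.sum_congr rfl fun _ _ => by ring

theorem trace_transpose_mul_mul_of_transpose_eq_neg [CommRing α] {S : Matrix n n α}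
    (hS : Sᵀ = -S) (B C : Matrix n n α) :
    (Bᵀ * S * C).trace = -((C * Bᵀ)ᵀ * S).trace := by
  rw [← trace_transpose, transpose_mul, transpose_mul, hS, transpose_transpose, transpose_mul,
    transpose_transpose, Matrix.neg_mul, Matrix.mul_neg, trace_neg, ← Matrix.mul_assoc,
    trace_mul_cycle]

theorem trace_transpose_add_mul_inv_transpose_mul [CommRing α] [DecidableEq n]
    (B Y S U dU : Matrix n n α) [Invertible U] :
    ((B + Y * U⁻¹ᵀ)ᵀ * (S * U + dU)).trace
      = (Bᵀ * S * U).trace + (Bᵀ * dU).trace + (Yᵀ * S).trace + (Yᵀ * (dU * U⁻¹)).trace := by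
  have hS : (U⁻¹ * Yᵀ * (S * U)).trace = (Yᵀ * S).trace := by
    rw [trace_mul_comm, Matrix.mul_assoc, ← Matrix.mul_assoc U, mul_inv_of_invertible,
      Matrix.one_mul, trace_mul_comm]
  have hdU : (U⁻¹ * Yᵀ * dU).trace = (Yᵀ * (dU * U⁻¹)).trace := by
    rw [trace_mul_cycle, ← Matrix.mul_assoc, trace_mul_comm, Matrix.mul_assoc]
  rw [transpose_add, transpose_mul, transpose_transpose, Matrix.add_mul, Matrix.mul_add,
    Matrix.mul_add, trace_add, trace_add, trace_add, hS, hdU, ← Matrix.mul_assoc Bᵀ]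
  ring

end Matrix

theorem PL_hadamard_eq_zero_iff {N : ℕ} {M : Matrix (Fin N) (Fin N) ℝ} :
    PL N ⊙ M = 0 ↔ M.IsUpperTriangular := by
  refine ⟨fun h i j hij => ?_, fun h => ?_⟩
  · have hij' := congrFun (congrFun h i) j
    simp only [PL, hadamard_apply, of_apply, ite_mul, one_mul, zero_mul, Matrix.zero_apply,
      ite_eq_right_iff] at hij'
    exact hij' hij
  · ext i j
    by_cases hij : j < i
    · simp [PL, hadamard_apply, h hij]
    · simp [PL, hadamard_apply, hij]

theorem trace_transpose_PL_hadamard_mul_of_isUpperTriangular {N : ℕ}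
    (X : Matrix (Fin N) (Fin N) ℝ) {U : Matrix (Fin N) (Fin N) ℝ} (hU : U.IsUpperTriangular) :
    ((PL N ⊙ X)ᵀ * U).trace = 0 := by
  rw [trace_transpose_hadamard_mul, PL_hadamard_eq_zero_iff.mpr hU, Matrix.mul_zero, trace_zero]

theorem PL_hadamard_sub_transpose_of_transpose_eq_neg {N : ℕ} {S : Matrix (Fin N) (Fin N) ℝ}
    (hS : Sᵀ = -S) : PL N ⊙ S - (PL N ⊙ S)ᵀ = S := by
  ext i j
  have hji : S j i = -S i j := by simpa using congrFun (congrFun hS i) j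
  rcases lt_trichotomy i j with h | rfl | h
  · simp [PL, hadamard_apply, h, not_lt.mpr h.le, hji]
  · have hii : S i i = 0 := by linarith
    simp [PL, hadamard_apply, hii]
  · simp [PL, hadamard_apply, h, not_lt.mpr h.le]

theorem trace_transpose_PL_hadamard_sub_transpose_mul {N : ℕ} {S : Matrix (Fin N) (Fin N) ℝ}
    (hS : Sᵀ = -S) (M : Matrix (Fin N) (Fin N) ℝ) :
    ((PL N ⊙ (M - Mᵀ))ᵀ * S).trace = (Mᵀ * S).trace := by
  set L := PL N ⊙ S
  have hML : (M * L).trace = (Mᵀ * Lᵀ).trace := by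
    rw [← trace_transpose, transpose_mul, trace_mul_comm]
  rw [trace_transpose_hadamard_mul, transpose_sub, transpose_transpose, Matrix.sub_mul, trace_sub,
    hML, ← trace_sub, ← Matrix.mul_sub, PL_hadamard_sub_transpose_of_transpose_eq_neg hS]

theorem qr_pullback_general (N : ℕ)
    (Q R dA dQ dR Qb Rb : Matrix (Fin N) (Fin N) ℝ)
    (hQ : Qᵀ * Q = 1)
    (hR : (PL N) ⊙ R = 0) (hRinv : IsUnit R.det)
    (hdA : dA = dQ * R + Q * dR)
    (hdQ : dQᵀ * Q + Qᵀ * dQ = 0)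
    (hdR : (PL N) ⊙ dR = 0) :
    ((Q * (Rb + ((PL N) ⊙ (R * Rbᵀ - Rb * Rᵀ + Qᵀ * Qb - Qbᵀ * Q)) * R⁻¹ᵀ)
        + (Qb - Q * Qᵀ * Qb) * R⁻¹ᵀ)ᵀ * dA).trace
      = (Qbᵀ * dQ).trace + (Rbᵀ * dR).trace := by
  have : Invertible R := R.invertibleOfIsUnitDet hRinv
  have hQQt : Q * Qᵀ = 1 := mul_eq_one_comm.mp hQ
  set S := Qᵀ * dQ
  set M := R * Rbᵀ + Qᵀ * Qb
  set Y := PL N ⊙ (M - Mᵀ)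
  have hS : Sᵀ = -S := by
    rw [transpose_mul, transpose_transpose, eq_neg_iff_add_eq_zero, hdQ]
  have hdQS : dQ = Q * S := by rw [← Matrix.mul_assoc, hQQt, Matrix.one_mul]
  have hY : PL N ⊙ (R * Rbᵀ - Rb * Rᵀ + Qᵀ * Qb - Qbᵀ * Q) = Y := by
    simp only [Y, M, transpose_add, transpose_mul, transpose_transpose]
    abel_nf
  have hQtdA : Qᵀ * dA = S * R + dR := by
    rw [hdA, Matrix.mul_add, ← Matrix.mul_assoc, ← Matrix.mul_assoc, hQ, Matrix.one_mul]
  have hdRRinv : (dR * R⁻¹).IsUpperTriangular :=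
    (PL_hadamard_eq_zero_iff.mp hdR).mul
      (blockTriangular_inv_of_blockTriangular (PL_hadamard_eq_zero_iff.mp hR))
  have hexpand : ((Q * (Rb + Y * R⁻¹ᵀ))ᵀ * dA).trace
      = (Rbᵀ * S * R).trace + (Rbᵀ * dR).trace + (Yᵀ * S).trace + (Yᵀ * (dR * R⁻¹)).trace := by
    rw [transpose_mul, Matrix.mul_assoc, hQtdA, trace_transpose_add_mul_inv_transpose_mul]
  rw [hQQt, Matrix.one_mul, sub_self, Matrix.zero_mul, add_zero, hY, hexpand,
    trace_transpose_mul_mul_of_transpose_eq_neg hS,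
    trace_transpose_PL_hadamard_sub_transpose_mul hS,
    trace_transpose_PL_hadamard_mul_of_isUpperTriangular _ hdRRinv, hdQS]
  simp only [M, transpose_add, Matrix.add_mul, trace_add, transpose_mul, transpose_transpose]
  rw [Matrix.mul_assoc Qbᵀ]
  ring

theorem qr_pullback (N : ℕ)
    (A Q R dA dQ dR Qb Rb : Matrix (Fin N) (Fin N) ℝ)
    (hA : A = Q * R) (hQ : Qᵀ * Q = 1)
    (hR : (PL N) ⊙ R = 0) (hRinv : IsUnit R.det)
    (hdA : dA = dQ * R + Q * dR)
    (hdQ : dQᵀ * Q + Qᵀ * dQ = 0)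
    (hdR : (PL N) ⊙ dR = 0) :
    ((Q * (Rb + ((PL N) ⊙ (R * Rbᵀ - Rb * Rᵀ + Qᵀ * Qb - Qbᵀ * Q)) * R⁻¹ᵀ)
        + (Qb - Q * Qᵀ * Qb) * R⁻¹ᵀ)ᵀ * dA).trace
      = (Qbᵀ * dQ).trace + (Rbᵀ * dR).trace :=
  qr_pullback_general N Q R dA dQ dR Qb Rb hQ hR hRinv hdA hdQ hdR
end

section
/- Let A ∈ ℝ^{N×N} with QR factorization A = QR (Q orthogonal, R upper triangular invertible), and suppose dA, dQ, dR satisfy the differentiated system dA = dQ R + Q dR, dQᵀQ + QᵀdQ = 0, P_L ∘ dR = 0. Then dQ and dR are uniquely determined by dA: explicitly X = P_L∘(QᵀdA R⁻¹) − (P_L∘(QᵀdA R⁻¹))ᵀ, dR = QᵀdA − XR, dQ = Q X. -/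
/-!
Write `X := Qᵀ dQ`. The constraint on `dQ` says `X` is skew-symmetric, and
`Qᵀ dA R⁻¹ = X + dR R⁻¹` with `dR R⁻¹` upper triangular. Hence the strictly lower part of
`Qᵀ dA R⁻¹` is that of `X`, which determines the skew matrix `X`; then `dQ = Q X` and
`dR = Qᵀ dA - X R`.
-/

open Matrix
open scoped Matrix

namespace PL

variable {N : ℕ}

theorem hadamard_eq_zero_iff (M : Matrix (Fin N) (Fin N) ℝ) :
    PL N ⊙ M = 0 ↔ M.BlockTriangular id := by
  constructor
  · intro h i j hij
    simpa [PL, hadamard, show j < i from hij] using congr_fun₂ h i j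
  · intro h
    ext i j
    by_cases hij : j < i
    · simp [PL, hadamard, hij, h hij]
    · simp [PL, hadamard, hij]

theorem hadamard_add_of_blockTriangular (X U : Matrix (Fin N) (Fin N) ℝ)
    (hU : U.BlockTriangular id) : PL N ⊙ (X + U) = PL N ⊙ X := by
  rw [hadamard_add, (hadamard_eq_zero_iff U).mpr hU, add_zero]

theorem eq_hadamard_sub_transpose_of_skew {X : Matrix (Fin N) (Fin N) ℝ} (h : Xᵀ + X = 0) :
    X = PL N ⊙ X - (PL N ⊙ X)ᵀ := by
  have hskew (i j : Fin N) : X j i + X i j = 0 := congr_fun₂ h i j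
  ext i j
  rcases lt_trichotomy j i with hij | rfl | hij
  · simp [hadamard, PL, hij, not_lt.mpr hij.le]
  · simp [hadamard, PL]
    linarith [hskew j j]
  · simp [hadamard, PL, hij, not_lt.mpr hij.le]
    linarith [hskew i j]

end PL

theorem qr_differential_eq {N : ℕ} {Q R dA dQ dR : Matrix (Fin N) (Fin N) ℝ}
    (hQ : Qᵀ * Q = 1) (hR : PL N ⊙ R = 0) (hRinv : IsUnit R.det)
    (hdA : dA = dQ * R + Q * dR) (hdQ : dQᵀ * Q + Qᵀ * dQ = 0) (hdR : PL N ⊙ dR = 0) :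
    dR = Qᵀ * dA - (PL N ⊙ (Qᵀ * dA * R⁻¹) - (PL N ⊙ (Qᵀ * dA * R⁻¹))ᵀ) * R ∧
      dQ = Q * (PL N ⊙ (Qᵀ * dA * R⁻¹) - (PL N ⊙ (Qᵀ * dA * R⁻¹))ᵀ) := by
  set X := Qᵀ * dQ with hXdef
  have hXskew : Xᵀ + X = 0 := by rwa [transpose_mul, transpose_transpose]
  have hQdA : Qᵀ * dA = X * R + dR := by
    rw [hdA, Matrix.mul_add, ← Matrix.mul_assoc, ← Matrix.mul_assoc, hQ, Matrix.one_mul]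
  have hdRRinv : (dR * R⁻¹).BlockTriangular id := by
    have := R.invertibleOfIsUnitDet hRinv
    exact ((PL.hadamard_eq_zero_iff dR).mp hdR).mul
      (blockTriangular_inv_of_blockTriangular ((PL.hadamard_eq_zero_iff R).mp hR))
  have hX : X = PL N ⊙ (Qᵀ * dA * R⁻¹) - (PL N ⊙ (Qᵀ * dA * R⁻¹))ᵀ := by
    rw [hQdA, Matrix.add_mul, Matrix.mul_assoc, mul_nonsing_inv R hRinv, Matrix.mul_one,
      PL.hadamard_add_of_blockTriangular X _ hdRRinv]
    exact PL.eq_hadamard_sub_transpose_of_skew hXskew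
  rw [← hX]
  refine ⟨by rw [hQdA]; abel, ?_⟩
  rw [hXdef, ← Matrix.mul_assoc, mul_eq_one_comm.mp hQ, Matrix.one_mul]

theorem qr_differential_unique_general (N : ℕ)
    (Q R dA : Matrix (Fin N) (Fin N) ℝ)
    (hQ : Qᵀ * Q = 1)
    (hR : (PL N) ⊙ R = 0) (hRinv : IsUnit R.det) :
    (∀ dQ dR : Matrix (Fin N) (Fin N) ℝ,
      dA = dQ * R + Q * dR → dQᵀ * Q + Qᵀ * dQ = 0 → (PL N) ⊙ dR = 0 →
        dR = Qᵀ * dA -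
            ((PL N) ⊙ (Qᵀ * dA * R⁻¹) - ((PL N) ⊙ (Qᵀ * dA * R⁻¹))ᵀ) * R ∧
        dQ = Q * ((PL N) ⊙ (Qᵀ * dA * R⁻¹) - ((PL N) ⊙ (Qᵀ * dA * R⁻¹))ᵀ)) ∧
    ∀ dQ₁ dR₁ dQ₂ dR₂ : Matrix (Fin N) (Fin N) ℝ,
      dA = dQ₁ * R + Q * dR₁ → dQ₁ᵀ * Q + Qᵀ * dQ₁ = 0 → (PL N) ⊙ dR₁ = 0 →
      dA = dQ₂ * R + Q * dR₂ → dQ₂ᵀ * Q + Qᵀ * dQ₂ = 0 → (PL N) ⊙ dR₂ = 0 →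
        dQ₁ = dQ₂ ∧ dR₁ = dR₂ := by
  refine ⟨fun dQ dR => qr_differential_eq hQ hR hRinv, ?_⟩
  intro dQ₁ dR₁ dQ₂ dR₂ hdA₁ hdQ₁ hdR₁ hdA₂ hdQ₂ hdR₂
  obtain ⟨hR₁, hQ₁⟩ := qr_differential_eq hQ hR hRinv hdA₁ hdQ₁ hdR₁
  obtain ⟨hR₂, hQ₂⟩ := qr_differential_eq hQ hR hRinv hdA₂ hdQ₂ hdR₂
  exact ⟨hQ₁.trans hQ₂.symm, hR₁.trans hR₂.symm⟩

theorem qr_differential_unique (N : ℕ)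
    (A Q R dA : Matrix (Fin N) (Fin N) ℝ)
    (hA : A = Q * R) (hQ : Qᵀ * Q = 1)
    (hR : (PL N) ⊙ R = 0) (hRinv : IsUnit R.det) :
    (∀ dQ dR : Matrix (Fin N) (Fin N) ℝ,
      dA = dQ * R + Q * dR → dQᵀ * Q + Qᵀ * dQ = 0 → (PL N) ⊙ dR = 0 →
        dR = Qᵀ * dA -
            ((PL N) ⊙ (Qᵀ * dA * R⁻¹) - ((PL N) ⊙ (Qᵀ * dA * R⁻¹))ᵀ) * R ∧
        dQ = Q * ((PL N) ⊙ (Qᵀ * dA * R⁻¹) - ((PL N) ⊙ (Qᵀ * dA * R⁻¹))ᵀ)) ∧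
    ∀ dQ₁ dR₁ dQ₂ dR₂ : Matrix (Fin N) (Fin N) ℝ,
      dA = dQ₁ * R + Q * dR₁ → dQ₁ᵀ * Q + Qᵀ * dQ₁ = 0 → (PL N) ⊙ dR₁ = 0 →
      dA = dQ₂ * R + Q * dR₂ → dQ₂ᵀ * Q + Qᵀ * dQ₂ = 0 → (PL N) ⊙ dR₂ = 0 →
        dQ₁ = dQ₂ ∧ dR₁ = dR₂ :=
  qr_differential_unique_general N Q R dA hQ hR hRinv
end
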